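/- arXiv:1512.02268 — 3 statements merged into one kernel-verified Lean document; each statement's English description precedes it below -/
import Mathlib

section
/- Let p, H be real with 0 < p ≤ 1 ≤ H and set k := √(1 − 1/H²). For every real η with Q(η) > 0, the function V(η) := (k·cosh η + √(Q(η)))^k / R₁(η) is differentiable at η and satisfies the differential equation V′(η) = −(1/H²) · (sinh η / R₁(η)) · V(η). -/
noncomputable def Q (p H η : ℝ) : ℝ :=
  1 - 1 / p ^ 2 + (1 - 1 / H ^ 2) * Real.sinh η ^ 2

noncomputable def R1 (p H η : ℝ) : ℝ :=
  Real.cosh η + Real.sqrt (Q p H η)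

/-! With `S = √(q + k² sinh² t)` one has `S' = k² sinh t cosh t / S`, hence
`(k cosh t + S)' = k sinh t (k cosh t + S) / S` and `(cosh t + S)' = sinh t (S + k² cosh t) / S`.
The logarithmic derivative of `(k cosh t + S)^k / (cosh t + S)` is therefore
`sinh t / S · (k² - (S + k² cosh t) / (cosh t + S)) = -(1 - k²) sinh t / (cosh t + S)`. -/

open Real

section

variable {q k η : ℝ}

theorem hasDerivAt_sqrt_add_mul_sinh_sq (h : 0 < q + k ^ 2 * sinh η ^ 2) :
    HasDerivAt (fun t => √(q + k ^ 2 * sinh t ^ 2))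
      (k ^ 2 * sinh η * cosh η / √(q + k ^ 2 * sinh η ^ 2)) η := by
  have hsq : HasDerivAt (fun t => q + k ^ 2 * sinh t ^ 2) (k ^ 2 * (2 * sinh η * cosh η)) η := by
    simpa using (((hasDerivAt_sinh η).pow 2).const_mul (k ^ 2)).const_add q
  convert hsq.sqrt h.ne' using 1
  field_simp

theorem hasDerivAt_rpow_mul_cosh_add_sqrt (hk : 0 ≤ k) (h : 0 < q + k ^ 2 * sinh η ^ 2) :
    HasDerivAt (fun t => (k * cosh t + √(q + k ^ 2 * sinh t ^ 2)) ^ k)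
      (k ^ 2 * sinh η / √(q + k ^ 2 * sinh η ^ 2) *
        (k * cosh η + √(q + k ^ 2 * sinh η ^ 2)) ^ k) η := by
  set S := √(q + k ^ 2 * sinh η ^ 2)
  have hS : 0 < S := sqrt_pos.mpr h
  have hA : 0 < k * cosh η + S := by positivity
  have hbase := ((hasDerivAt_cosh η).const_mul k).add (hasDerivAt_sqrt_add_mul_sinh_sq h)
  refine (hbase.rpow_const (p := k) (Or.inl hA.ne')).congr_deriv ?_
  simp only [Pi.add_apply]
  rw [rpow_sub_one hA.ne']
  field_simp
  ring

theorem hasDerivAt_cosh_add_sqrt (h : 0 < q + k ^ 2 * sinh η ^ 2) :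
    HasDerivAt (fun t => cosh t + √(q + k ^ 2 * sinh t ^ 2))
      (sinh η * (√(q + k ^ 2 * sinh η ^ 2) + k ^ 2 * cosh η) /
        √(q + k ^ 2 * sinh η ^ 2)) η := by
  have hS : √(q + k ^ 2 * sinh η ^ 2) ≠ 0 := (sqrt_pos.mpr h).ne'
  refine ((hasDerivAt_cosh η).add (hasDerivAt_sqrt_add_mul_sinh_sq h)).congr_deriv ?_
  rw [mul_add, add_div, mul_div_cancel_right₀ _ hS]
  ring

theorem hasDerivAt_rpow_mul_cosh_add_sqrt_div (hk : 0 ≤ k) (h : 0 < q + k ^ 2 * sinh η ^ 2) :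
    HasDerivAt
      (fun t => (k * cosh t + √(q + k ^ 2 * sinh t ^ 2)) ^ k / (cosh t + √(q + k ^ 2 * sinh t ^ 2)))
      (-(1 - k ^ 2) * (sinh η / (cosh η + √(q + k ^ 2 * sinh η ^ 2))) *
        ((k * cosh η + √(q + k ^ 2 * sinh η ^ 2)) ^ k / (cosh η + √(q + k ^ 2 * sinh η ^ 2)))) η := by
  have hS : 0 < √(q + k ^ 2 * sinh η ^ 2) := sqrt_pos.mpr h
  have hR : 0 < cosh η + √(q + k ^ 2 * sinh η ^ 2) := by positivity
  refine ((hasDerivAt_rpow_mul_cosh_add_sqrt hk h).div (hasDerivAt_cosh_add_sqrt h)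
    hR.ne').congr_deriv ?_
  generalize √(q + k ^ 2 * sinh η ^ 2) = S at hS hR ⊢
  field_simp
  ring

end

theorem stmt0_general (p H : ℝ) (hH : 1 ≤ H) (η : ℝ)
    (hQ : 0 < Q p H η) :
    HasDerivAt
      (fun t : ℝ =>
        (Real.sqrt (1 - 1 / H ^ 2) * Real.cosh t + Real.sqrt (Q p H t)) ^
            Real.sqrt (1 - 1 / H ^ 2) / R1 p H t)
      (-(1 / H ^ 2) * (Real.sinh η / R1 p H η) *
        ((Real.sqrt (1 - 1 / H ^ 2) * Real.cosh η + Real.sqrt (Q p H η)) ^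
            Real.sqrt (1 - 1 / H ^ 2) / R1 p H η))
      η := by
  set k := √(1 - 1 / H ^ 2)
  have hk2 : k ^ 2 = 1 - 1 / H ^ 2 := sq_sqrt <| sub_nonneg.mpr <|
    (div_le_one (by positivity)).mpr (one_le_pow₀ hH)
  have hQ_eq : Q p H = fun t => 1 - 1 / p ^ 2 + k ^ 2 * sinh t ^ 2 := by
    funext t
    rw [Q, hk2]
  have hH2 : 1 / H ^ 2 = 1 - k ^ 2 := by linarith
  unfold R1
  rw [hQ_eq] at hQ ⊢
  rw [hH2]
  exact hasDerivAt_rpow_mul_cosh_add_sqrt_div (sqrt_nonneg _) hQ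

/-- With `k := √(1 - 1/H²)`, the function
`V(η) := (k·cosh η + √(Q η))^k / R₁(η)` is differentiable at every `η` with `Q η > 0`
and satisfies `V′(η) = -(1/H²)·(sinh η / R₁ η)·V(η)`. -/
theorem stmt0 (p H : ℝ) (hp : 0 < p) (hp1 : p ≤ 1) (hH : 1 ≤ H) (η : ℝ)
    (hQ : 0 < Q p H η) :
    HasDerivAt
      (fun t : ℝ =>
        (Real.sqrt (1 - 1 / H ^ 2) * Real.cosh t + Real.sqrt (Q p H t)) ^
            Real.sqrt (1 - 1 / H ^ 2) / R1 p H t)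
      (-(1 / H ^ 2) * (Real.sinh η / R1 p H η) *
        ((Real.sqrt (1 - 1 / H ^ 2) * Real.cosh η + Real.sqrt (Q p H η)) ^
            Real.sqrt (1 - 1 / H ^ 2) / R1 p H η))
      η :=
  stmt0_general p H hH η hQ
end

section
/- Let p, H be real with 0 < p ≤ 1 ≤ H and set a := √(1/p² − 1). Define D(η) := 1/H² − 1/p² + (1/H² − 1/p² + 2(1 − 1/H²))·cosh²η and Y₁(η) := exp( −(a/2) · arctan( a · 2·cosh η·√(Q(η)) / D(η) ) ). Then for every real η with Q(η) > 0, sinh η ≠ 0 and D(η) ≠ 0, Y₁ is differentiable at η and Y₁′(η) = ( (1/p² − 1) / ( sinh η · √(Q(η)) ) ) · Y₁(η). -/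
/-- `a p = √(1/p² - 1)`. -/
noncomputable def aa (p : ℝ) : ℝ := Real.sqrt (1 / p ^ 2 - 1)

/-- `D p H η = 1/H² - 1/p² + (1/H² - 1/p² + 2(1 - 1/H²))·cosh²η`. -/
noncomputable def D (p H η : ℝ) : ℝ :=
  1 / H ^ 2 - 1 / p ^ 2 + (1 / H ^ 2 - 1 / p ^ 2 + 2 * (1 - 1 / H ^ 2)) * Real.cosh η ^ 2

/-- `Y₁(η) := exp(-(a/2)·arctan(a·2·cosh η·√(Q η)/D η))`. -/
noncomputable def Y1 (p H η : ℝ) : ℝ :=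
  Real.exp (-(aa p / 2) *
    Real.arctan (aa p * (2 * Real.cosh η * Real.sqrt (Q p H η)) / D p H η))

/-!
With `x = halfTan = a cosh η / √Q` one has `D = Q - a² cosh² η = Q (1 - x²)`, so the argument
of the arctangent in `Y₁` is `2x / (1 - x²)`, whose arctangent has derivative `2x' / (1 + x²)`,
like `2 arctan x` (tangent double-angle formula). Moreover `Q + a² cosh² η = (1/p² - 1/H²) sinh² η`,
which turns the derivative of `x` into `x' = -a (1 + x²) / (sinh η √Q)`. Hence
`Y₁' = -(a/2) · 2x' / (1 + x²) · Y₁ = a² / (sinh η √Q) · Y₁`.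
-/

open Real Filter Topology

theorem hasDerivAt_arctan_two_mul_div_one_sub_sq {f : ℝ → ℝ} {f' x : ℝ}
    (hf : HasDerivAt f f' x) (hfx : f x ^ 2 ≠ 1) :
    HasDerivAt (fun t => arctan (2 * f t / (1 - f t ^ 2))) (2 * f' / (1 + f x ^ 2)) x := by
  have hden : 1 - f x ^ 2 ≠ 0 := sub_ne_zero.mpr hfx.symm
  refine ((hf.const_mul 2).fun_div ((hf.fun_pow 2).const_sub 1) hden).arctan.congr_deriv ?_
  field_simp
  ring

theorem aa_sq {p : ℝ} (hp : 0 < p) (hp1 : p ≤ 1) : aa p ^ 2 = 1 / p ^ 2 - 1 := by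
  have : 1 ≤ 1 / p ^ 2 := by
    rw [le_div_iff₀ (by positivity)]
    nlinarith
  exact sq_sqrt (by linarith)

theorem Q_eq_cosh_sq (p H t : ℝ) :
    Q p H t = 1 / H ^ 2 - 1 / p ^ 2 + (1 - 1 / H ^ 2) * cosh t ^ 2 := by
  rw [Q, cosh_sq]
  ring

theorem D_eq_Q_sub (p H t : ℝ) : D p H t = Q p H t - (1 / p ^ 2 - 1) * cosh t ^ 2 := by
  rw [D, Q_eq_cosh_sq]
  ring

theorem Q_add_cosh_sq (p H t : ℝ) :
    Q p H t + (1 / p ^ 2 - 1) * cosh t ^ 2 = (1 / p ^ 2 - 1 / H ^ 2) * sinh t ^ 2 := by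
  rw [Q_eq_cosh_sq, cosh_sq]
  ring

theorem continuous_Q (p H : ℝ) : Continuous (Q p H) := by
  unfold Q
  fun_prop

noncomputable def halfTan (p H t : ℝ) : ℝ := aa p * cosh t / √(Q p H t)

theorem one_sub_halfTan_sq {p H t : ℝ} (hp : 0 < p) (hp1 : p ≤ 1) (ht : 0 < Q p H t) :
    1 - halfTan p H t ^ 2 = D p H t / Q p H t := by
  rw [halfTan, div_pow, mul_pow, aa_sq hp hp1, sq_sqrt ht.le, D_eq_Q_sub]
  field_simp

theorem one_add_halfTan_sq {p H t : ℝ} (hp : 0 < p) (hp1 : p ≤ 1) (ht : 0 < Q p H t) :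
    1 + halfTan p H t ^ 2 = (1 / p ^ 2 - 1 / H ^ 2) * sinh t ^ 2 / Q p H t := by
  rw [halfTan, div_pow, mul_pow, aa_sq hp hp1, sq_sqrt ht.le, ← Q_add_cosh_sq]
  field_simp

theorem Y1_eq_exp_arctan_halfTan {p H t : ℝ} (hp : 0 < p) (hp1 : p ≤ 1) (ht : 0 < Q p H t) :
    Y1 p H t = exp (-(aa p / 2) *
      arctan (2 * halfTan p H t / (1 - halfTan p H t ^ 2))) := by
  rw [Y1, one_sub_halfTan_sq hp hp1 ht, div_div_eq_mul_div]
  congr 3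
  rw [halfTan]
  field_simp
  rw [sq_sqrt ht.le]

theorem hasDerivAt_halfTan {p H η : ℝ} (hp : 0 < p) (hp1 : p ≤ 1) (hQ : 0 < Q p H η)
    (hs : sinh η ≠ 0) :
    HasDerivAt (halfTan p H)
      (-aa p * (1 + halfTan p H η ^ 2) / (sinh η * √(Q p H η))) η := by
  have hQ' : HasDerivAt (Q p H) ((1 - 1 / H ^ 2) * (2 * sinh η * cosh η)) η := by
    refine ((((hasDerivAt_sinh η).fun_pow 2).const_mul (1 - 1 / H ^ 2)).const_add
      (1 - 1 / p ^ 2)).congr_deriv ?_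
    ring
  have hS : 0 < √(Q p H η) := sqrt_pos.mpr hQ
  refine (((hasDerivAt_cosh η).const_mul (aa p)).fun_div (hQ'.sqrt hQ.ne') hS.ne').congr_deriv ?_
  rw [one_add_halfTan_sq hp hp1 hQ]
  field_simp
  rw [sq_sqrt hQ.le, show Q p H η - cosh η ^ 2 * (1 - 1 / H ^ 2) = 1 / H ^ 2 - 1 / p ^ 2 by
    rw [Q_eq_cosh_sq]; ring]
  field_simp
  ring

theorem stmt3_general (p H : ℝ) (hp : 0 < p) (hp1 : p ≤ 1) (η : ℝ)
    (hQ : 0 < Q p H η) (hs : Real.sinh η ≠ 0) (hD : D p H η ≠ 0) :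
    HasDerivAt (fun t : ℝ => Y1 p H t)
      ((1 / p ^ 2 - 1) / (Real.sinh η * Real.sqrt (Q p H η)) * Y1 p H η) η := by
  have hx_sq : halfTan p H η ^ 2 ≠ 1 := by
    rw [ne_eq, ← sub_eq_zero, ← neg_eq_zero, neg_sub, one_sub_halfTan_sq hp hp1 hQ]
    exact div_ne_zero hD hQ.ne'
  have hY1 : (fun t => Y1 p H t) =ᶠ[𝓝 η]
      fun t => exp (-(aa p / 2) * arctan (2 * halfTan p H t / (1 - halfTan p H t ^ 2))) :=
    ((continuous_Q p H).continuousAt.eventually (lt_mem_nhds hQ)).mono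
      fun t ht => Y1_eq_exp_arctan_halfTan hp hp1 ht
  refine ((((hasDerivAt_arctan_two_mul_div_one_sub_sq (hasDerivAt_halfTan hp hp1 hQ hs)
    hx_sq).const_mul (-(aa p / 2))).exp).congr_of_eventuallyEq hY1).congr_deriv ?_
  rw [← Y1_eq_exp_arctan_halfTan hp hp1 hQ, ← aa_sq hp hp1]
  field_simp

/-- For every `η` with `Q η > 0`, `sinh η ≠ 0` and `D η ≠ 0`, the function `Y₁`
is differentiable at `η` and satisfies
`Y₁′(η) = ((1/p² - 1)/(sinh η·√(Q η)))·Y₁(η)`. -/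
theorem stmt3 (p H : ℝ) (hp : 0 < p) (hp1 : p ≤ 1) (hH : 1 ≤ H) (η : ℝ)
    (hQ : 0 < Q p H η) (hs : Real.sinh η ≠ 0) (hD : D p H η ≠ 0) :
    HasDerivAt (fun t : ℝ => Y1 p H t)
      ((1 / p ^ 2 - 1) / (Real.sinh η * Real.sqrt (Q p H η)) * Y1 p H η) η :=
  stmt3_general p H hp hp1 η hQ hs hD
end

section
/- Let p, H be real with 0 < p ≤ 1 ≤ H. Let J ⊆ (0, ∞) be an open interval, let η : J → ℝ be differentiable with η′(r) = p² · R₁(η(r)) · sinh(η(r)) / r and Q(η(r)) ≥ 0 for all r ∈ J, and let V be a differentiable real function satisfying V′(s) = −(1/H²)·(sinh s / R₁(s))·V(s) for all s in the range of η. Then W(r) := V(η(r)) is twice differentiable on J and its second derivative satisfies W″(r) = −(1/H²) · (η′(r))² · W(r), i.e. W″(r) = −(p⁴/H²) · R₁(η(r))² · sinh²(η(r)) · W(r) / r², for all r ∈ J. -/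
/-!
Since `R₁` cancels in the chain rule, `W' = k W` with `k(r) = -(p²/H²) sinh²(η r) / r`.
Hence `W'' = (k' + k²) W`, and `k' + k² = -(1/H²) η'²` is equivalent to `R₁` being a root of
`p² X² - 2 p² cosh η · X + 1 + (p²/H²) sinh² η`, which is `(R₁ - cosh η)² = Q(η)`.
-/

open Real Filter Topology

theorem R1_pos (p H s : ℝ) : 0 < R1 p H s :=
  add_pos_of_pos_of_nonneg (cosh_pos s) (sqrt_nonneg _)

theorem R1_sq {p H s : ℝ} (hp : p ≠ 0) (hQ : 0 ≤ Q p H s) :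
    p ^ 2 * R1 p H s ^ 2 = 2 * p ^ 2 * R1 p H s * cosh s - 1 - p ^ 2 / H ^ 2 * sinh s ^ 2 := by
  have hsq : (R1 p H s - cosh s) ^ 2 = Q p H s := by simp [R1, sq_sqrt hQ]
  have hp2 : p ^ 2 * (1 / p ^ 2) = 1 := by field_simp
  unfold Q at hsq
  linear_combination p ^ 2 * hsq - hp2 - p ^ 2 * cosh_sq s

theorem hasDerivAt_deriv_of_eventually_hasDerivAt_mul {W k : ℝ → ℝ} {k' r : ℝ}
    (hW : ∀ᶠ t in 𝓝 r, HasDerivAt W (k t * W t) t) (hk : HasDerivAt k k' r) :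
    HasDerivAt (deriv W) ((k' + k r ^ 2) * W r) r := by
  refine ((hk.mul hW.self_of_nhds).congr_of_eventuallyEq (hW.mono fun t ht => ht.deriv)).congr_deriv ?_
  ring

theorem hasDerivAt_sinh_sq_comp_div {η : ℝ → ℝ} {e r : ℝ} (hη : HasDerivAt η e r) (hr : r ≠ 0) :
    HasDerivAt (fun t => sinh (η t) ^ 2 / t)
      (2 * sinh (η r) * cosh (η r) * e / r - sinh (η r) ^ 2 / r ^ 2) r := by
  refine ((hη.sinh.pow 2).div (hasDerivAt_id' r) hr).congr_deriv ?_
  simp only [Pi.pow_apply]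
  field_simp
  ring

theorem stmt12_general (p H : ℝ) (hp : 0 < p)
    (J : Set ℝ) (hJopen : IsOpen J)
    (hJpos : J ⊆ Set.Ioi (0 : ℝ))
    (η V : ℝ → ℝ)
    (hη : ∀ r ∈ J, HasDerivAt η (p ^ 2 * R1 p H (η r) * Real.sinh (η r) / r) r)
    (hQ : ∀ r ∈ J, 0 ≤ Q p H (η r))
    (hV : Differentiable ℝ V)
    (hV' : ∀ s ∈ η '' J, deriv V s = -(1 / H ^ 2) * (Real.sinh s / R1 p H s) * V s) :
    ∀ r ∈ J,
      HasDerivAt (deriv (fun t => V (η t)))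
        (-(1 / H ^ 2) * deriv η r ^ 2 * V (η r)) r ∧
      -(1 / H ^ 2) * deriv η r ^ 2 * V (η r) =
        -(p ^ 4 / H ^ 2) * R1 p H (η r) ^ 2 * Real.sinh (η r) ^ 2 * V (η r) / r ^ 2 := by
  have hW : ∀ t ∈ J, HasDerivAt (fun t => V (η t))
      (-(p ^ 2 / H ^ 2) * (sinh (η t) ^ 2 / t) * V (η t)) t := by
    intro t ht
    refine ((hV (η t)).hasDerivAt.comp t (hη t ht)).congr_deriv ?_
    rw [hV' (η t) ⟨t, ht, rfl⟩]
    field_simp [(R1_pos p H (η t)).ne']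
  intro r hr
  have hr0 : r ≠ 0 := (hJpos hr).ne'
  have hW'' := hasDerivAt_deriv_of_eventually_hasDerivAt_mul
    (eventually_of_mem (hJopen.mem_nhds hr) hW)
    ((hasDerivAt_sinh_sq_comp_div (hη r hr) hr0).const_mul _)
  rw [(hη r hr).deriv]
  refine ⟨hW''.congr_deriv ?_, by ring⟩
  linear_combination (p ^ 2 * sinh (η r) ^ 2 * V (η r) / (H ^ 2 * r ^ 2)) * R1_sq hp.ne' (hQ r hr)

/-- Let `J ⊆ (0,∞)` be an open interval, `η` differentiable on `J` with
`η′(r) = p²·R₁(η r)·sinh(η r)/r` and `Q(η r) ≥ 0`, and let `V` be differentiable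
with `V′(s) = -(1/H²)·(sinh s/R₁ s)·V s` for all `s` in the range of `η`.
Then `W := V ∘ η` is twice differentiable on `J` and
`W″(r) = -(1/H²)·(η′(r))²·W(r)`, i.e.
`W″(r) = -(p⁴/H²)·R₁(η r)²·sinh²(η r)·W(r)/r²`, on `J`. -/
theorem stmt12 (p H : ℝ) (hp : 0 < p) (hp1 : p ≤ 1) (hH : 1 ≤ H)
    (J : Set ℝ) (hJopen : IsOpen J) (hJconn : J.OrdConnected)
    (hJpos : J ⊆ Set.Ioi (0 : ℝ))
    (η V : ℝ → ℝ)
    (hη : ∀ r ∈ J, HasDerivAt η (p ^ 2 * R1 p H (η r) * Real.sinh (η r) / r) r)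
    (hQ : ∀ r ∈ J, 0 ≤ Q p H (η r))
    (hV : Differentiable ℝ V)
    (hV' : ∀ s ∈ η '' J, deriv V s = -(1 / H ^ 2) * (Real.sinh s / R1 p H s) * V s) :
    ∀ r ∈ J,
      HasDerivAt (deriv (fun t => V (η t)))
        (-(1 / H ^ 2) * deriv η r ^ 2 * V (η r)) r ∧
      -(1 / H ^ 2) * deriv η r ^ 2 * V (η r) =
        -(p ^ 4 / H ^ 2) * R1 p H (η r) ^ 2 * Real.sinh (η r) ^ 2 * V (η r) / r ^ 2 :=
  stmt12_general p H hp J hJopen hJpos η V hη hQ hV hV'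
end
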